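/- arXiv:2010.13877 — 6 statements merged into one kernel-verified Lean document; each statement's English description precedes it below -/
import Mathlib

section
/- Let c ≤ 0, d > 0 with d ≥ |c|, and set φ₁,ₙ = 2·exp(c/n)·cos(d/n), φ₂,ₙ = −exp(2c/n). Then as n → ∞, −φ₁,ₙ(1 − φ₂,ₙ)/(4φ₂,ₙ) = 1 − (d² − c²)/(2n²) + O(n⁻⁴). In particular, if d > |c| then for all sufficiently large n the quantity −φ₁,ₙ(1 − φ₂,ₙ)/(4φ₂,ₙ) lies strictly in (−1, 1). -/
open Filter Asymptotics

/-- The AR(2) coefficient `φ₁,ₙ`. -/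
noncomputable def phi1 (c d : ℝ) (n : ℕ) : ℝ :=
  2 * Real.exp (c / (n : ℝ)) * Real.cos (d / (n : ℝ))

/-- The AR(2) coefficient `φ₂,ₙ`. -/
noncomputable def phi2 (c : ℝ) (n : ℕ) : ℝ :=
  -Real.exp (2 * c / (n : ℝ))

lemma my_cosh_bound {b : ℝ} (hb : |b| ≤ 1) :
    |Real.cosh b - (1 + b ^ 2 / 2)| ≤ |b| ^ 4 * (5 / 96) := by
  have h1 := Real.exp_bound hb (n := 4) (by norm_num)
  have h2 := Real.exp_bound (x := -b) (by rwa [abs_neg]) (n := 4) (by norm_num)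
  simp only [Finset.sum_range_succ, Finset.sum_range_zero, Nat.factorial] at h1 h2
  rw [abs_neg] at h2
  norm_num at h1 h2
  have key : Real.cosh b - (1 + b ^ 2 / 2)
      = ((Real.exp b - (1 + b + b^2/2 + b^3/6))
        + (Real.exp (-b) - (1 + -b + b^2/2 + -(b^3)/6))) / 2 := by
    rw [Real.cosh_eq]; ring
  rw [key, abs_div, abs_two]
  have h3 := abs_add_le (Real.exp b - (1 + b + b^2/2 + b^3/6))
      (Real.exp (-b) - (1 + -b + b^2/2 + -(b^3)/6))
  have e1 : |Real.exp b - (1 + b + b^2/2 + b^3/6)| ≤ |b|^4 * (5/96) := by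
    convert h1 using 2
  have e2 : |Real.exp (-b) - (1 + -b + b^2/2 + -(b^3)/6)| ≤ |b|^4 * (5/96) := by
    convert h2 using 3; ring
  linarith


lemma my_identity (c d : ℝ) (n : ℕ) :
    -(phi1 c d n * (1 - phi2 c n)) / (4 * phi2 c n)
      = Real.cos (d / n) * Real.cosh (c / n) := by
  unfold phi1 phi2
  have h2 : Real.exp (2 * c / (n:ℝ)) = Real.exp (c / n) * Real.exp (c / n) := by
    rw [← Real.exp_add]; ring_nf
  rw [h2, Real.cosh_eq, Real.exp_neg]
  have hE : Real.exp (c / (n:ℝ)) ≠ 0 := (Real.exp_pos _).ne'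
  field_simp
  ring

lemma my_aux (a b : ℝ) (ha : |a| ≤ 1) (hb : |b| ≤ |a|) :
    |Real.cos a * Real.cosh b - (1 - a ^ 2 / 2 + b ^ 2 / 2)| ≤ a ^ 4 := by
  have hb1 : |b| ≤ 1 := hb.trans ha
  have h1 := Real.cos_bound ha
  have h2 := my_cosh_bound hb1
  have ha4 : |a| ^ 4 = a ^ 4 := by
    rw [← abs_pow, abs_of_nonneg (by positivity)]
  have hb4 : |b| ^ 4 = b ^ 4 := by
    rw [← abs_pow, abs_of_nonneg (by positivity)]
  have hba : b ^ 2 ≤ a ^ 2 := by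
    have := sq_abs a; have := sq_abs b; nlinarith [abs_nonneg a, abs_nonneg b]
  have hba4 : b ^ 4 ≤ a ^ 4 := by nlinarith [sq_nonneg a, sq_nonneg b]
  have ha2 : a ^ 2 ≤ 1 := by nlinarith [sq_abs a, abs_nonneg a]
  have hb2 : b ^ 2 ≤ 1 := hba.trans ha2
  have hcosh1 : 1 ≤ Real.cosh b := Real.one_le_cosh b
  rw [ha4] at h1; rw [hb4] at h2
  rw [abs_le] at h1 h2 ⊢
  obtain ⟨h1l, h1r⟩ := h1
  obtain ⟨h2l, h2r⟩ := h2
  have hcosh2 : Real.cosh b ≤ 2 := by nlinarith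
  constructor <;> nlinarith [Real.neg_one_le_cos a, Real.cos_le_one a,
    mul_le_mul_of_nonneg_right h1r (le_trans zero_le_one hcosh1),
    mul_le_mul_of_nonneg_right h1l (le_trans zero_le_one hcosh1),
    sq_nonneg a, sq_nonneg b, sq_nonneg (a*b), sq_nonneg (a^2)]
lemma my_est (c d : ℝ) (hd : 0 < d) (hdc : |c| ≤ d) {n : ℕ} (hnd : d ≤ (n : ℝ)) :
    |Real.cos (d / n) * Real.cosh (c / n) - (1 - (d ^ 2 - c ^ 2) / (2 * (n : ℝ) ^ 2))|
      ≤ d ^ 4 / (n : ℝ) ^ 4 := by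
  have hn : (0:ℝ) < n := lt_of_lt_of_le hd hnd
  have ha : |d / (n:ℝ)| ≤ 1 := by
    rw [abs_of_nonneg (by positivity), div_le_one hn]; exact hnd
  have hb : |c / (n:ℝ)| ≤ |d / (n:ℝ)| := by
    rw [abs_div, abs_div, abs_of_nonneg hn.le, abs_of_nonneg hd.le]
    gcongr
  have h := my_aux (d / n) (c / n) ha hb
  have e1 : 1 - (d/(n:ℝ))^2/2 + (c/(n:ℝ))^2/2 = 1 - (d^2 - c^2)/(2*(n:ℝ)^2) := by
    field_simp; ring
  have e2 : (d/(n:ℝ))^4 = d^4/(n:ℝ)^4 := div_pow d _ 4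
  rw [e1, e2] at h
  exact h

/-- `−φ₁,ₙ(1 − φ₂,ₙ)/(4φ₂,ₙ) = 1 − (d² − c²)/(2n²) + O(n⁻⁴)`, and if
`d > |c|` then for all sufficiently large `n` this quantity lies strictly in `(−1, 1)`. -/
theorem stmt7 (c d : ℝ) (hc : c ≤ 0) (hd : 0 < d) (hdc : |c| ≤ d) :
    ((fun n : ℕ => -(phi1 c d n * (1 - phi2 c n)) / (4 * phi2 c n)
        - (1 - (d ^ 2 - c ^ 2) / (2 * (n : ℝ) ^ 2)))
      =O[atTop] (fun n : ℕ => 1 / (n : ℝ) ^ 4)) ∧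
    (|c| < d → ∀ᶠ n : ℕ in atTop,
      -(phi1 c d n * (1 - phi2 c n)) / (4 * phi2 c n) ∈ Set.Ioo (-1 : ℝ) 1) := by
  have hev : ∀ᶠ n : ℕ in atTop, d ≤ (n : ℝ) :=
    tendsto_natCast_atTop_atTop.eventually_ge_atTop d
  constructor
  · rw [isBigO_iff]
    refine ⟨d ^ 4, ?_⟩
    filter_upwards [hev] with n hnd
    have hn : (0:ℝ) < n := lt_of_lt_of_le hd hnd
    rw [my_identity]
    have h := my_est c d hd hdc hnd
    rw [Real.norm_eq_abs, Real.norm_eq_abs]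
    rw [abs_of_nonneg (by positivity : (0:ℝ) ≤ 1 / (n:ℝ)^4)]
    calc _ ≤ d^4 / (n:ℝ)^4 := h
      _ = d^4 * (1 / (n:ℝ)^4) := by ring
  · intro hlt
    have hev2 : ∀ᶠ n : ℕ in atTop, 2 * d ^ 4 / (d ^ 2 - c ^ 2) < (n : ℝ) :=
      tendsto_natCast_atTop_atTop.eventually_gt_atTop _
    have hev3 : ∀ᶠ n : ℕ in atTop, (1:ℝ) ≤ (n : ℝ) :=
      tendsto_natCast_atTop_atTop.eventually_ge_atTop 1
    filter_upwards [hev, hev2, hev3] with n hnd hn2 hn1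
    have hn : (0:ℝ) < n := lt_of_lt_of_le hd hnd
    rw [my_identity]
    have h := my_est c d hd hdc hnd
    rw [abs_le] at h
    obtain ⟨hl, hr⟩ := h
    have hc2 : c ^ 2 < d ^ 2 := by nlinarith [sq_abs c, abs_nonneg c]
    have hpos : 0 < d ^ 2 - c ^ 2 := by linarith
    have hnn2 : (n:ℝ) ≤ (n:ℝ)^2 := by nlinarith
    constructor
    · -- lower bound: f ≥ 1 - (d²-c²)/(2n²) - d⁴/n⁴ > -1
      have t1 : (d ^ 2 - c ^ 2) / (2 * (n:ℝ) ^ 2) ≤ 1 / 2 := by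
        rw [div_le_div_iff₀ (by positivity) (by norm_num)]
        nlinarith [sq_abs c, abs_nonneg c]
      have t2 : d ^ 4 / (n:ℝ) ^ 4 ≤ 1 := by
        rw [div_le_one (by positivity)]
        exact pow_le_pow_left₀ hd.le hnd 4
      linarith
    · -- upper bound: f ≤ 1 - (d²-c²)/(2n²) + d⁴/n⁴ < 1
      have t3 : d ^ 4 / (n:ℝ) ^ 4 < (d ^ 2 - c ^ 2) / (2 * (n:ℝ) ^ 2) := by
        rw [div_lt_div_iff₀ (by positivity) (by positivity)]
        have : 2 * d ^ 4 < (d ^ 2 - c ^ 2) * (n:ℝ) := by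
          rw [div_lt_iff₀ hpos] at hn2; linarith
        have h3 : (n:ℝ)^2 ≤ (n:ℝ)^3 := by nlinarith
        nlinarith [mul_lt_mul_of_pos_right this (pow_pos hn 3), pow_nonneg hd.le 4]
      linarith
end

section
/- Let c ≤ 0, d > 0 with d > |c|, and let ω*ₙ be as above. Then the spectrum-based relative period τ = (2π/ω*ₙ)/n satisfies τ = 2π/√(d² − c²) + O(n⁻²) as n → ∞. -/
open Filter Asymptotics

/-- The spectrum-maximizing frequency `ω*ₙ = arccos(−φ₁,ₙ(1 − φ₂,ₙ)/(4φ₂,ₙ))`. -/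
noncomputable def omegaStar (c d : ℝ) (n : ℕ) : ℝ :=
  Real.arccos (-(phi1 c d n * (1 - phi2 c n)) / (4 * phi2 c n))

/-!
Clearing denominators in its definition, `ω*ₙ = arccos (cos (d/n) · cosh (c/n))`. Put
`a = √(d² − c²)`. To fourth order, `cos u · cosh v = cos w + O(u⁴ + v⁴)` whenever
`w² = u² − v²`, because the quadratic terms cancel; hence `cos ω*ₙ = cos (a/n) + O(n⁻⁴)`.
Conversely `cos y − cos x = −2 sin ((y + x)/2) sin ((y − x)/2)`, and Jordan's inequality bounds
both sines from below, so `x |y − x| ≲ |cos y − cos x|` on `[0, π]`. With `x = a/n` this gives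
`n ω*ₙ = a + O(n⁻²)`, and the theorem follows because `y ↦ 2π/y` is differentiable at `a`.
-/

open Real Topology

lemma Real.cosh_bound {x : ℝ} (hx : |x| ≤ 1) :
    |cosh x - (1 + x ^ 2 / 2)| ≤ |x| ^ 4 * (5 / 96) := by
  have h := Complex.cos_bound (x := x * Complex.I) (by simpa using hx)
  have e : Complex.cos (x * Complex.I) - (1 - (x * Complex.I) ^ 2 / 2)
      = ((cosh x - (1 + x ^ 2 / 2) : ℝ) : ℂ) := by
    rw [Complex.cos_mul_I, ← Complex.ofReal_cosh]; push_cast; ring_nf; rw [Complex.I_sq]; ring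
  rwa [e, Complex.norm_real, Real.norm_eq_abs, norm_mul, Complex.norm_I, mul_one,
    Complex.norm_real, Real.norm_eq_abs] at h

lemma abs_cos_mul_cosh_sub_cos_le {u v w : ℝ} (hu : |u| ≤ 1) (hw : w ^ 2 = u ^ 2 - v ^ 2) :
    |cos u * cosh v - cos w| ≤ (u ^ 4 + v ^ 4) / 2 := by
  have hv : |v| ≤ |u| := sq_le_sq.mp (by nlinarith)
  have hw' : |w| ≤ |u| := sq_le_sq.mp (by nlinarith)
  have hA := cos_bound hu
  have hB := cosh_bound (hv.trans hu)
  have hC := cos_bound (hw'.trans hu)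
  have hu2 : u ^ 2 ≤ 1 := by rw [← sq_abs]; exact pow_le_one₀ (abs_nonneg u) hu
  have hv2 : v ^ 2 ≤ u ^ 2 := sq_le_sq.mpr hv
  have hw4 : w ^ 4 ≤ u ^ 4 := by nlinarith [sq_nonneg v, sq_nonneg w]
  simp only [Even.pow_abs (by decide : Even 4)] at hA hB hC
  have hcosh : |cosh v| ≤ 2 := by
    rw [abs_of_pos (cosh_pos v)]
    nlinarith [(abs_le.mp hB).2]
  have hu2' : |1 - u ^ 2 / 2| ≤ 1 := by
    rw [abs_le]; constructor <;> nlinarith [sq_nonneg u]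
  have hexpand : cos u * cosh v - cos w = (cos u - (1 - u ^ 2 / 2)) * cosh v
      + (1 - u ^ 2 / 2) * (cosh v - (1 + v ^ 2 / 2)) - (cos w - (1 - w ^ 2 / 2))
      - u ^ 2 * v ^ 2 / 4 := by linear_combination (1 / 2) * hw
  rw [hexpand]
  calc _ ≤ |(cos u - (1 - u ^ 2 / 2)) * cosh v|
          + |(1 - u ^ 2 / 2) * (cosh v - (1 + v ^ 2 / 2))|
          + |cos w - (1 - w ^ 2 / 2)| + |u ^ 2 * v ^ 2 / 4| :=
        (abs_sub _ _).trans <| add_le_add_left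
          ((abs_sub _ _).trans <| add_le_add_left (abs_add_le _ _) _) _
    _ ≤ u ^ 4 * (5 / 96) * 2 + 1 * (v ^ 4 * (5 / 96)) + u ^ 4 * (5 / 96)
          + u ^ 2 * v ^ 2 / 4 := by
        rw [abs_mul, abs_mul, abs_of_nonneg (by positivity : 0 ≤ u ^ 2 * v ^ 2 / 4)]
        gcongr; linarith
    _ ≤ (u ^ 4 + v ^ 4) / 2 := by nlinarith [sq_nonneg (u ^ 2 - v ^ 2)]

lemma abs_cos_arccos_sub_le {z : ℝ} (hz₁ : -1 ≤ z) (hz₂ : z ≤ 1) (F : ℝ) :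
    |cos (arccos F) - z| ≤ |F - z| := by
  rcases le_or_gt F (-1) with hF | hF
  · rw [arccos_of_le_neg_one hF, cos_pi, abs_of_nonpos (by linarith),
      abs_of_nonpos (by linarith)]
    linarith
  rcases le_or_gt 1 F with hF' | hF'
  · rw [arccos_of_one_le hF', cos_zero, abs_of_nonneg (by linarith),
      abs_of_nonneg (by linarith)]
    linarith
  · rw [cos_arccos hF.le hF'.le]

lemma div_pi_le_sin_half_add {x y : ℝ} (hx₀ : 0 ≤ x) (hx : x ≤ π / 2) (hy₀ : 0 ≤ y)
    (hy : y ≤ π) : x / π ≤ sin ((y + x) / 2) := by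
  have hπ := pi_pos
  rcases le_or_gt ((y + x) / 2) (π / 2) with hs | hs
  · calc x / π ≤ 2 / π * ((y + x) / 2) := by rw [div_mul_eq_mul_div]; gcongr; linarith
      _ ≤ _ := mul_le_sin (by positivity) hs
  · rw [← sin_pi_sub]
    calc x / π ≤ 2 / π * (π / 4) := by rw [div_mul_eq_mul_div]; gcongr; linarith
      _ ≤ 2 / π * (π - (y + x) / 2) := by gcongr; linarith
      _ ≤ _ := mul_le_sin (by linarith) (by linarith)

lemma two_mul_mul_abs_sub_le_of_cos {x y : ℝ} (hx₀ : 0 ≤ x) (hx : x ≤ π / 2) (hy₀ : 0 ≤ y)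
    (hy : y ≤ π) : 2 * x * |y - x| ≤ π ^ 2 * |cos y - cos x| := by
  have hπ := pi_pos
  have hsum := div_pi_le_sin_half_add hx₀ hx hy₀ hy
  have hdiff := mul_abs_le_abs_sin (x := (y - x) / 2)
    (by rw [abs_le]; constructor <;> linarith)
  have hsin₀ : 0 ≤ sin ((y + x) / 2) := (div_nonneg hx₀ hπ.le).trans hsum
  rw [abs_div, abs_two] at hdiff
  calc 2 * x * |y - x| = π ^ 2 * (2 * (x / π) * (2 / π * (|y - x| / 2))) := by field_simp
    _ ≤ π ^ 2 * (2 * sin ((y + x) / 2) * |sin ((y - x) / 2)|) := by gcongr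
    _ = π ^ 2 * |cos y - cos x| := by
      rw [cos_sub_cos, abs_mul, abs_mul, abs_of_nonneg hsin₀]; norm_num

lemma two_mul_mul_abs_arccos_sub_le {x : ℝ} (hx₀ : 0 ≤ x) (hx : x ≤ π / 2) (F : ℝ) :
    2 * x * |arccos F - x| ≤ π ^ 2 * |F - cos x| :=
  (two_mul_mul_abs_sub_le_of_cos hx₀ hx (arccos_nonneg F) (arccos_le_pi F)).trans <|
    mul_le_mul_of_nonneg_left (abs_cos_arccos_sub_le (neg_one_le_cos x) (cos_le_one x) F)
      (sq_nonneg π)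

lemma four_mul_mul_abs_arccos_cos_mul_cosh_sub_le {u v w : ℝ} (hu : |u| ≤ 1)
    (hw₀ : 0 ≤ w) (hw : w ^ 2 = u ^ 2 - v ^ 2) :
    4 * w * |arccos (cos u * cosh v) - w| ≤ π ^ 2 * (u ^ 4 + v ^ 4) := by
  have hwu : w ≤ 1 := by nlinarith [sq_abs u, abs_nonneg u, sq_nonneg v]
  have hinv := two_mul_mul_abs_arccos_sub_le hw₀ (hwu.trans (by linarith [pi_gt_three]))
    (cos u * cosh v)
  have htaylor := abs_cos_mul_cosh_sub_cos_le hu hw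
  nlinarith [sq_nonneg π]

lemma omegaStar_eq_arccos (c d : ℝ) (n : ℕ) :
    omegaStar c d n = arccos (cos (d / n) * cosh (c / n)) := by
  have he : exp (2 * c / n) = exp (c / n) * exp (c / n) := by rw [← exp_add]; ring_nf
  rw [omegaStar, phi1, phi2, cosh_eq, exp_neg, he]
  congr 1
  field_simp
  ring

lemma four_mul_mul_abs_natCast_mul_omegaStar_sub_le {c d a : ℝ} {n : ℕ} (hn : 0 < n)
    (hdn : |d| ≤ n) (ha₀ : 0 ≤ a) (ha : a ^ 2 = d ^ 2 - c ^ 2) :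
    4 * a * |n * omegaStar c d n - a| ≤ π ^ 2 * (d ^ 4 + c ^ 4) / n ^ 2 := by
  have hn' : (0 : ℝ) < n := by exact_mod_cast hn
  have hu : |d / n| ≤ 1 := by rw [abs_div, Nat.abs_cast, div_le_one hn']; exact hdn
  have key := four_mul_mul_abs_arccos_cos_mul_cosh_sub_le (v := c / n) hu
    (div_nonneg ha₀ hn'.le) (by simp only [div_pow]; rw [ha, sub_div])
  rw [← omegaStar_eq_arccos] at key
  have hscale : |n * omegaStar c d n - a| = n * |omegaStar c d n - a / n| := by
    rw [← abs_of_pos hn', ← abs_mul, abs_of_pos hn']; congr 1; field_simp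
  rw [hscale]
  calc 4 * a * (n * |omegaStar c d n - a / n|)
        = n ^ 2 * (4 * (a / n) * |omegaStar c d n - a / n|) := by field_simp
    _ ≤ n ^ 2 * (π ^ 2 * ((d / n) ^ 4 + (c / n) ^ 4)) := by gcongr
    _ = π ^ 2 * (d ^ 4 + c ^ 4) / n ^ 2 := by field_simp

lemma sqrt_sq_sub_sq_pos {c d : ℝ} (hdc : |c| < d) : 0 < √(d ^ 2 - c ^ 2) :=
  sqrt_pos.2 <| sub_pos.2 <| sq_lt_sq.mpr <| by rwa [abs_of_pos ((abs_nonneg c).trans_lt hdc)]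

lemma isBigO_natCast_mul_omegaStar_sub {c d : ℝ} (hdc : |c| < d) :
    (fun n : ℕ => n * omegaStar c d n - √(d ^ 2 - c ^ 2)) =O[atTop]
      (fun n : ℕ => 1 / (n : ℝ) ^ 2) := by
  have hd : 0 < d := (abs_nonneg c).trans_lt hdc
  have ha := sqrt_sq_sub_sq_pos hdc
  refine IsBigO.of_bound (π ^ 2 * (d ^ 4 + c ^ 4) / (4 * √(d ^ 2 - c ^ 2))) ?_
  filter_upwards [eventually_ge_atTop ⌈d⌉₊, eventually_gt_atTop 0] with n hdn hn
  have key := four_mul_mul_abs_natCast_mul_omegaStar_sub_le hn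
    (by rw [abs_of_pos hd]; exact Nat.ceil_le.mp hdn) ha.le (sq_sqrt (sqrt_pos.mp ha).le)
  rw [norm_eq_abs, norm_eq_abs, abs_of_pos (by positivity : (0 : ℝ) < 1 / n ^ 2)]
  calc _ = 4 * √(d ^ 2 - c ^ 2) * |n * omegaStar c d n - √(d ^ 2 - c ^ 2)|
        / (4 * √(d ^ 2 - c ^ 2)) := by field_simp
    _ ≤ π ^ 2 * (d ^ 4 + c ^ 4) / n ^ 2 / (4 * √(d ^ 2 - c ^ 2)) := by gcongr
    _ = _ := by ring

theorem stmt9_general (c d : ℝ) (hdc : |c| < d) :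
    (fun n : ℕ => (2 * Real.pi / omegaStar c d n) / (n : ℝ)
        - 2 * Real.pi / Real.sqrt (d ^ 2 - c ^ 2))
      =O[atTop] (fun n : ℕ => 1 / (n : ℝ) ^ 2) := by
  have ha := (sqrt_sq_sub_sq_pos hdc).ne'
  have hω := isBigO_natCast_mul_omegaStar_sub hdc
  have hlim : Tendsto (fun n : ℕ => n * omegaStar c d n) atTop (𝓝 (√(d ^ 2 - c ^ 2))) := by
    refine tendsto_sub_nhds_zero_iff.mp (hω.trans_tendsto ?_)
    simpa [inv_pow] using (tendsto_inv_atTop_nhds_zero_nat (𝕜 := ℝ)).pow 2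
  have hφ := ((hasDerivAt_inv ha).const_mul (2 * π)).isBigO_sub.comp_tendsto hlim
  refine (hφ.trans hω).congr_left fun n => ?_
  simp only [Function.comp_apply, mul_inv, div_eq_mul_inv]
  ring

/-- Proposition 1: the spectrum-based relative period satisfies
`(2π/ω*ₙ)/n = 2π/√(d² − c²) + O(n⁻²)`. -/
theorem stmt9 (c d : ℝ) (hc : c ≤ 0) (hd : 0 < d) (hdc : |c| < d) :
    (fun n : ℕ => (2 * Real.pi / omegaStar c d n) / (n : ℝ)
        - 2 * Real.pi / Real.sqrt (d ^ 2 - c ^ 2))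
      =O[atTop] (fun n : ℕ => 1 / (n : ℝ) ^ 2) :=
  stmt9_general c d hdc
end

section
/- Let (y_t) be a real sequence satisfying y_t = φ₁·y_{t−1} + φ₂·y_{t−2} + u_t for t ≥ 2, where φ₂ ≠ 1. Then for every n ≥ 3: ∑_{t=3}^{n} y_{t−1}·y_{t−2} = (φ₁/(1 − φ₂))·∑_{t=2}^{n} y_{t−1}² + (1/(1 − φ₂))·(∑_{t=2}^{n} y_{t−1}·u_t − y_n·y_{n−1}) + (φ₂/(1 − φ₂))·y₀·y₁. -/
/-- Lemma A.2(b): summation identity for the AR(2) recursion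
`y_t = φ₁ y_{t−1} + φ₂ y_{t−2} + u_t` with `φ₂ ≠ 1`. -/
theorem stmt11 (y u : ℕ → ℝ) (φ₁ φ₂ : ℝ) (hφ : φ₂ ≠ 1)
    (hrec : ∀ t, 2 ≤ t → y t = φ₁ * y (t - 1) + φ₂ * y (t - 2) + u t)
    (n : ℕ) (hn : 3 ≤ n) :
    ∑ t ∈ Finset.Icc 3 n, y (t - 1) * y (t - 2)
      = (φ₁ / (1 - φ₂)) * ∑ t ∈ Finset.Icc 2 n, (y (t - 1)) ^ 2
        + (1 / (1 - φ₂)) * ((∑ t ∈ Finset.Icc 2 n, y (t - 1) * u t) - y n * y (n - 1))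
        + (φ₂ / (1 - φ₂)) * (y 0 * y 1) := by
  have hφ' : 1 - φ₂ ≠ 0 := sub_ne_zero.mpr (Ne.symm hφ)
  induction n, hn using Nat.le_induction with
  | base =>
    have h2 := hrec 2 (by norm_num)
    have h3 := hrec 3 (by norm_num)
    norm_num at h2 h3
    norm_num [show Finset.Icc 3 3 = {3} from rfl,
      show Finset.Icc 2 3 = {2, 3} from by decide]
    rw [h3, h2]
    field_simp
    ring
  | succ n hn ih =>
    have hr := hrec (n + 1) (by omega)
    have e2 : n + 1 - 2 = n - 1 := by omega
    simp only [Nat.add_sub_cancel, e2] at hr ⊢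
    rw [Finset.sum_Icc_succ_top (by omega : 3 ≤ n + 1),
        Finset.sum_Icc_succ_top (by omega : 2 ≤ n + 1),
        Finset.sum_Icc_succ_top (by omega : 2 ≤ n + 1)]
    simp only [Nat.add_sub_cancel, e2]
    rw [ih, hr]
    field_simp
    ring
end

section
/- Let W be a standard Brownian motion and for real c, d with d ≠ 0 define J(r) = (1/d)·∫₀^r e^{c(r−s)} sin(d(r−s)) dW(s) and K(r) = (1/d)·∫₀^r e^{c(r−s)} cos(d(r−s)) dW(s). Then J satisfies the pathwise differential relation dJ(r) = (c·J(r) + d·K(r)) dr; in particular J is of class C¹ in r with derivative G(r) = c·J(r) + d·K(r). -/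
/-!
Write `z = c + d i`. Summation by parts and the fundamental theorem of calculus identify the
pathwise integral `∫₀^r e^{z(r-s)} dw(s)` (the limit of the complex Riemann–Stieltjes sums) with
`ξ(r) = w(r) - w(0) e^{zr} + z ∫₀^r w(t) e^{z(r-t)} dt`, so that `J = Im ξ / d` and
`K = Re ξ / d`. Since `w` is real, `Im ξ` is the imaginary part of the differentiable function
`-w(0) e^{zr} + z e^{zr} ∫₀^r w(t) e^{-zt} dt`, whose derivative is `z ξ`. Hence
`J' = Im (z ξ) / d = (c Im ξ + d Re ξ) / d = c J + d K`.
-/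

open Filter MeasureTheory intervalIntegral

/-- Pathwise Itô integral `∫₀^r f dW` along the path `w`, defined as the limit of
left-endpoint Riemann–Stieltjes sums over uniform partitions of `[0, r]`. -/
noncomputable def itoInt (f w : ℝ → ℝ) (r : ℝ) : ℝ :=
  limUnder atTop (fun n : ℕ => ∑ k ∈ Finset.range n,
    f ((k : ℝ) * r / n) * (w (((k : ℝ) + 1) * r / n) - w ((k : ℝ) * r / n)))

/-- `J(r) = (1/d)·∫₀^r e^{c(r−s)} sin(d(r−s)) dW(s)`. -/
noncomputable def Jp (c d : ℝ) (w : ℝ → ℝ) (r : ℝ) : ℝ :=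
  (1 / d) * itoInt (fun s => Real.exp (c * (r - s)) * Real.sin (d * (r - s))) w r

/-- `K(r) = (1/d)·∫₀^r e^{c(r−s)} cos(d(r−s)) dW(s)`. -/
noncomputable def Kp (c d : ℝ) (w : ℝ → ℝ) (r : ℝ) : ℝ :=
  (1 / d) * itoInt (fun s => Real.exp (c * (r - s)) * Real.cos (d * (r - s))) w r

/-- `G(r) = c·J(r) + d·K(r)`. -/
noncomputable def Gp (c d : ℝ) (w : ℝ → ℝ) (r : ℝ) : ℝ :=
  c * Jp c d w r + d * Kp c d w r

open Finset Topology

noncomputable def unifPt (r : ℝ) (n k : ℕ) : ℝ := k * r / n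

theorem unifPt_mem_uIcc {r : ℝ} {n k : ℕ} (hk : k ≤ n) : unifPt r n k ∈ Set.uIcc 0 r := by
  rcases Nat.eq_zero_or_pos n with rfl | hn
  · simp [unifPt]
  have hkn : (k : ℝ) / n ∈ Set.Icc 0 1 :=
    ⟨by positivity, div_le_one_of_le₀ (by exact_mod_cast hk) (Nat.cast_nonneg n)⟩
  rw [unifPt, mul_div_right_comm]
  rcases le_total 0 r with hr | hr
  · rw [Set.uIcc_of_le hr]
    exact ⟨mul_nonneg hkn.1 hr, mul_le_of_le_one_left hr hkn.2⟩
  · rw [Set.uIcc_of_ge hr]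
    exact ⟨by nlinarith [hkn.2], mul_nonpos_of_nonneg_of_nonpos hkn.1 hr⟩

theorem unifPt_succ_sub (r : ℝ) (n k : ℕ) : unifPt r n (k + 1) - unifPt r n k = r / n := by
  simp only [unifPt]; push_cast; ring

theorem unifPt_zero (r : ℝ) (n : ℕ) : unifPt r n 0 = 0 := by simp [unifPt]

theorem unifPt_self (r : ℝ) {n : ℕ} (hn : n ≠ 0) : unifPt r n n = r := by
  simp [unifPt, hn]

theorem sum_range_sub_smul_eq {R M : Type*} [Ring R] [AddCommGroup M] [Module R M]
    (b : ℕ → R) (a : ℕ → M) (n : ℕ) :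
    ∑ k ∈ range n, (b (k + 1) - b k) • a k
      = b n • a n - b 0 • a 0 - ∑ k ∈ range n, b (k + 1) • (a (k + 1) - a k) := by
  rw [← sum_range_sub (fun k => b k • a k), eq_sub_iff_add_eq, ← sum_add_distrib]
  refine sum_congr rfl fun k _ => ?_
  simp only [sub_smul, smul_sub]
  abel

section RiemannStieltjes

variable {E : Type*} [NormedAddCommGroup E] [NormedSpace ℝ E]

noncomputable def rsSum (f : ℝ → E) (w : ℝ → ℝ) (r : ℝ) (n : ℕ) : E :=
  ∑ k ∈ range n, (w (unifPt r n (k + 1)) - w (unifPt r n k)) • f (unifPt r n k)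

theorem norm_integral_sub_smul_le {a b ε M : ℝ} {g : ℝ → E} {w : ℝ → ℝ} (hε : 0 ≤ ε)
    (hw : ∀ t ∈ Set.uIcc a b, |w b - w t| ≤ ε) (hg : ∀ t ∈ Set.uIcc a b, ‖g t‖ ≤ M) :
    ‖∫ t in a..b, (w b - w t) • g t‖ ≤ ε * M * |b - a| := by
  refine norm_integral_le_of_norm_le_const fun t ht => ?_
  have ht := Set.uIoc_subset_uIcc ht
  rw [norm_smul, Real.norm_eq_abs]
  exact mul_le_mul (hw t ht) (hg t ht) (norm_nonneg _) hε

theorem sum_integral_smul_right_endpoint_sub {g : ℝ → E} {w : ℝ → ℝ}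
    (hg : Continuous g) (hw : Continuous w) (r : ℝ) {n : ℕ} (hn : n ≠ 0) :
    (∑ k ∈ range n, ∫ t in unifPt r n k..unifPt r n (k + 1), w (unifPt r n (k + 1)) • g t)
        - ∫ t in 0..r, w t • g t
      = ∑ k ∈ range n,
          ∫ t in unifPt r n k..unifPt r n (k + 1), (w (unifPt r n (k + 1)) - w t) • g t := by
  have hintegrable : ∀ v : ℝ → ℝ, Continuous v → ∀ a b : ℝ,
      IntervalIntegrable (fun t => v t • g t) volume a b :=
    fun v hv a b => (hv.smul hg).intervalIntegrable a b
  have hsplit : ∫ t in 0..r, w t • g t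
      = ∑ k ∈ range n, ∫ t in unifPt r n k..unifPt r n (k + 1), w t • g t := by
    rw [sum_integral_adjacent_intervals fun k _ => hintegrable w hw _ _, unifPt_zero,
      unifPt_self r hn]
  rw [hsplit, ← sum_sub_distrib]
  refine sum_congr rfl fun k _ => ?_
  simp only [sub_smul]
  exact (integral_sub (hintegrable _ continuous_const _ _) (hintegrable w hw _ _)).symm

theorem tendsto_sum_integral_smul_right_endpoint {g : ℝ → E} {w : ℝ → ℝ}
    (hg : Continuous g) (hw : Continuous w) (r : ℝ) :
    Tendsto (fun n : ℕ => ∑ k ∈ range n,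
        ∫ t in unifPt r n k..unifPt r n (k + 1), w (unifPt r n (k + 1)) • g t)
      atTop (𝓝 (∫ t in 0..r, w t • g t)) := by
  obtain ⟨M, hM⟩ :=
    isCompact_uIcc.exists_bound_of_continuousOn (hg.continuousOn (s := Set.uIcc 0 r))
  have hM0 : 0 ≤ M := (norm_nonneg _).trans (hM 0 Set.left_mem_uIcc)
  have hwu : UniformContinuousOn w (Set.uIcc 0 r) :=
    isCompact_uIcc.uniformContinuousOn_of_continuous hw.continuousOn
  rw [← tendsto_sub_nhds_zero_iff, NormedAddGroup.tendsto_nhds_zero]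
  intro ε hε
  set η := ε / (M * |r| + 1)
  have hη : 0 < η := by positivity
  obtain ⟨δ, hδ, hwδ⟩ := Metric.uniformContinuousOn_iff_le.mp hwu η hη
  filter_upwards [eventually_ne_atTop 0,
    (tendsto_const_div_atTop_nhds_zero_nat |r|).eventually (ge_mem_nhds hδ)] with n hn hmesh
  have hpiece : ∀ k ∈ range n,
      ‖∫ t in unifPt r n k..unifPt r n (k + 1), (w (unifPt r n (k + 1)) - w t) • g t‖
        ≤ η * M * (|r| / n) := by
    intro k hk
    have hk := mem_range.mp hk
    have hsub := Set.uIcc_subset_uIcc (unifPt_mem_uIcc (r := r) hk.le) (unifPt_mem_uIcc hk)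
    have hlen : |unifPt r n (k + 1) - unifPt r n k| = |r| / n := by
      rw [unifPt_succ_sub, abs_div, Nat.abs_cast]
    rw [← hlen]
    refine norm_integral_sub_smul_le hη.le (fun t ht => ?_) (fun t ht => hM t (hsub ht))
    refine hwδ _ (unifPt_mem_uIcc hk) t (hsub ht) ?_
    rw [Real.dist_eq]
    exact (Set.abs_sub_right_of_mem_uIcc ht).trans (hlen.le.trans hmesh)
  rw [sum_integral_smul_right_endpoint_sub hg hw r hn]
  calc _ ≤ ∑ k ∈ range n, η * M * (|r| / n) := (norm_sum_le _ _).trans (sum_le_sum hpiece)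
    _ = η * (M * |r|) := by rw [sum_const, card_range, nsmul_eq_mul]; field_simp
    _ < ε := by
        rw [div_mul_eq_mul_div, div_lt_iff₀ (by positivity)]
        nlinarith [abs_nonneg r]

theorem rsSum_eq_sub_sum_integral [CompleteSpace E] {f f' : ℝ → E} {w : ℝ → ℝ}
    (hf : ∀ x, HasDerivAt f (f' x) x) (hf' : Continuous f') (r : ℝ) {n : ℕ} (hn : n ≠ 0) :
    rsSum f w r n = w r • f r - w 0 • f 0 -
      ∑ k ∈ range n, ∫ t in unifPt r n k..unifPt r n (k + 1), w (unifPt r n (k + 1)) • f' t := by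
  rw [rsSum, sum_range_sub_smul_eq (fun k => w (unifPt r n k)) (fun k => f (unifPt r n k)),
    unifPt_zero, unifPt_self r hn]
  refine congrArg _ (sum_congr rfl fun k _ => ?_)
  rw [intervalIntegral.integral_smul,
    integral_eq_sub_of_hasDerivAt (fun x _ => hf x) (hf'.intervalIntegrable _ _)]

theorem tendsto_rsSum [CompleteSpace E] {f f' : ℝ → E} {w : ℝ → ℝ}
    (hf : ∀ x, HasDerivAt f (f' x) x) (hf' : Continuous f') (hw : Continuous w) (r : ℝ) :
    Tendsto (rsSum f w r) atTop (𝓝 (w r • f r - w 0 • f 0 - ∫ t in 0..r, w t • f' t)) := by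
  refine ((tendsto_sum_integral_smul_right_endpoint hf' hw r).const_sub _).congr' ?_
  filter_upwards [eventually_ne_atTop 0] with n hn
  exact (rsSum_eq_sub_sum_integral hf hf' r hn).symm

end RiemannStieltjes

theorem itoInt_comp_eq_of_tendsto {E : Type*} [NormedAddCommGroup E] [NormedSpace ℝ E]
    (ℓ : E →L[ℝ] ℝ) {f : ℝ → E} {w : ℝ → ℝ} {r : ℝ} {L : E}
    (h : Tendsto (rsSum f w r) atTop (𝓝 L)) :
    itoInt (fun s => ℓ (f s)) w r = ℓ L := by
  unfold itoInt
  refine (((ℓ.continuous.tendsto L).comp h).congr fun n => ?_).limUnder_eq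
  simp only [Function.comp_apply, rsSum, map_sum, map_smul, smul_eq_mul, unifPt]
  push_cast
  exact sum_congr rfl fun k _ => mul_comm _ _

noncomputable def expConv (z : ℂ) (w : ℝ → ℝ) (r : ℝ) : ℂ :=
  ∫ t in 0..r, w t • Complex.exp (z * ↑(r - t))

noncomputable def expKernelIntegral (z : ℂ) (w : ℝ → ℝ) (r : ℝ) : ℂ :=
  w r - w 0 * Complex.exp (z * r) + z * expConv z w r

section ExpKernel

variable (z : ℂ) {w : ℝ → ℝ}

theorem hasDerivAt_cexp_mul_ofReal (x : ℝ) :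
    HasDerivAt (fun x : ℝ => Complex.exp (z * x)) (z * Complex.exp (z * x)) x := by
  simpa [mul_comm] using ((hasDerivAt_id x).ofReal_comp.const_mul z).cexp

theorem expConv_eq_exp_mul (w : ℝ → ℝ) (r : ℝ) :
    expConv z w r = Complex.exp (z * r) * ∫ t in 0..r, w t • Complex.exp (-(z * t)) := by
  rw [expConv, ← intervalIntegral.integral_const_mul]
  refine integral_congr fun t _ => ?_
  rw [mul_smul_comm, ← Complex.exp_add]
  push_cast
  ring_nf

theorem hasDerivAt_expConv (hw : Continuous w) (r : ℝ) :
    HasDerivAt (expConv z w) (z * expConv z w r + w r) r := by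
  have hprim : HasDerivAt (fun x => ∫ t in 0..x, w t • Complex.exp (-(z * t)))
      (w r • Complex.exp (-(z * r))) r :=
    ((by fun_prop : Continuous fun t : ℝ => w t • Complex.exp (-(z * t)))
      |>.integral_hasStrictDerivAt 0 r).hasDerivAt
  rw [show expConv z w = _ from funext (expConv_eq_exp_mul z w)]
  refine ((hasDerivAt_cexp_mul_ofReal z r).mul hprim).congr_deriv ?_
  rw [Complex.real_smul, Complex.exp_neg]
  field_simp [Complex.exp_ne_zero]

theorem continuous_expKernelIntegral (hw : Continuous w) : Continuous (expKernelIntegral z w) := by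
  have hconv : Continuous (expConv z w) :=
    continuous_iff_continuousAt.mpr fun r => (hasDerivAt_expConv z hw r).continuousAt
  unfold expKernelIntegral
  fun_prop

theorem tendsto_rsSum_expKernelIntegral (hw : Continuous w) (r : ℝ) :
    Tendsto (rsSum (fun s => Complex.exp (z * ↑(r - s))) w r) atTop
      (𝓝 (expKernelIntegral z w r)) := by
  have hf : ∀ s : ℝ, HasDerivAt (fun s : ℝ => Complex.exp (z * ↑(r - s)))
      (-z * Complex.exp (z * ↑(r - s))) s :=
    fun s => by
      simpa [mul_comm] using (((hasDerivAt_id s).const_sub r).ofReal_comp.const_mul z).cexp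
  convert tendsto_rsSum hf (by fun_prop) hw r using 2
  simp only [expKernelIntegral, expConv, sub_self, sub_zero, Complex.ofReal_zero, mul_zero,
    Complex.exp_zero, Complex.real_smul, mul_one, mul_left_comm _ (-z),
    intervalIntegral.integral_const_mul]
  ring

theorem hasDerivAt_im_expKernelIntegral (hw : Continuous w) (r : ℝ) :
    HasDerivAt (fun r => (expKernelIntegral z w r).im) ((z * expKernelIntegral z w r).im) r := by
  -- `expKernelIntegral z w` minus its real, non-differentiable term `w r`
  have hη : HasDerivAt (fun x : ℝ => -(w 0 : ℂ) * Complex.exp (z * x) + z * expConv z w x)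
      (z * expKernelIntegral z w r) r :=
    (((hasDerivAt_cexp_mul_ofReal z r).const_mul _).add
      ((hasDerivAt_expConv z hw r).const_mul z)).congr_deriv (by rw [expKernelIntegral]; ring)
  refine (Complex.imCLM.hasFDerivAt.comp_hasDerivAt r hη).congr_of_eventuallyEq
    (Eventually.of_forall fun x => ?_)
  simp [expKernelIntegral]

end ExpKernel

theorem Jp_eq_im (c d : ℝ) {w : ℝ → ℝ} (hw : Continuous w) (r : ℝ) :
    Jp c d w r = 1 / d * (expKernelIntegral ⟨c, d⟩ w r).im := by
  have hker : (fun s => Real.exp (c * (r - s)) * Real.sin (d * (r - s)))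
      = fun s => Complex.imCLM (Complex.exp (⟨c, d⟩ * ↑(r - s))) := by
    funext s
    simp [Complex.exp_im]
  rw [Jp, hker, itoInt_comp_eq_of_tendsto _ (tendsto_rsSum_expKernelIntegral _ hw r)]
  rfl

theorem Kp_eq_re (c d : ℝ) {w : ℝ → ℝ} (hw : Continuous w) (r : ℝ) :
    Kp c d w r = 1 / d * (expKernelIntegral ⟨c, d⟩ w r).re := by
  have hker : (fun s => Real.exp (c * (r - s)) * Real.cos (d * (r - s)))
      = fun s => Complex.reCLM (Complex.exp (⟨c, d⟩ * ↑(r - s))) := by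
    funext s
    simp [Complex.exp_re]
  rw [Kp, hker, itoInt_comp_eq_of_tendsto _ (tendsto_rsSum_expKernelIntegral _ hw r)]
  rfl

theorem stmt13_general {Ω : Type*} [MeasurableSpace Ω] (P : Measure Ω)
    (W : Ω → ℝ → ℝ) (c d : ℝ)
    (hWcont : ∀ ω, Continuous (W ω)) :
    ∀ᵐ ω ∂P,
      (∀ r ∈ Set.Icc (0 : ℝ) 1, HasDerivAt (Jp c d (W ω)) (Gp c d (W ω) r) r) ∧
      ContinuousOn (Gp c d (W ω)) (Set.Icc (0 : ℝ) 1) := by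
  refine ae_of_all P fun ω => ?_
  set ξ := expKernelIntegral ⟨c, d⟩ (W ω)
  have hJ : Jp c d (W ω) = fun r => 1 / d * (ξ r).im := funext (Jp_eq_im c d (hWcont ω))
  have hG : Gp c d (W ω) = fun r => 1 / d * (⟨c, d⟩ * ξ r : ℂ).im := by
    funext r
    rw [Gp, Jp_eq_im c d (hWcont ω), Kp_eq_re c d (hWcont ω), Complex.mul_im]
    ring
  rw [hJ, hG]
  refine ⟨fun r _ => (hasDerivAt_im_expKernelIntegral _ (hWcont ω) r).const_mul _, ?_⟩
  have hξ : Continuous ξ := continuous_expKernelIntegral _ (hWcont ω)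
  fun_prop

/-- Lemma A.3(a): `dJ(r) = (c·J(r) + d·K(r)) dr = G(r) dr`; in particular
`J` is `C¹` with derivative `G`, almost surely. -/
theorem stmt13 {Ω : Type*} [MeasurableSpace Ω] (P : Measure Ω) [IsProbabilityMeasure P]
    (W : Ω → ℝ → ℝ) (c d : ℝ) (hd : d ≠ 0)
    (hWcont : ∀ ω, Continuous (W ω)) (hW0 : ∀ ω, W ω 0 = 0) :
    ∀ᵐ ω ∂P,
      (∀ r ∈ Set.Icc (0 : ℝ) 1, HasDerivAt (Jp c d (W ω)) (Gp c d (W ω) r) r) ∧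
      ContinuousOn (Gp c d (W ω)) (Set.Icc (0 : ℝ) 1) :=
  stmt13_general P W c d hWcont
end

section
/- With W, J, K, G as above and c² + d² ≠ 0, for every r ∈ [0,1]: ∫₀^r e^{2c(r−s)} J(s) ds = (1/(c² + d²))·( ∫₀^r e^{2c(r−s)} dW(s) − (c·J(r) + d·K(r)) ) almost surely. -/
open Filter MeasureTheory intervalIntegral

/-!
For a `C¹` integrand the pathwise integral is a Riemann–Stieltjes integral, so summation by parts
gives `∫₀^r f dw = f r * w r - f 0 * w 0 - ∫₀^r f' w`. Applied to the kernels
`e^{c(r-s)} sin(d(r-s))`, `e^{c(r-s)} cos(d(r-s))` and `e^{2c(r-s)}`, and after splitting them with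
`e^{c(r-s)} = e^{cr} e^{-cs}` and the addition formulas, `J(r)`, `K(r)` and `∫₀^r e^{2c(r-s)} dW(s)`
become explicit combinations of the three moments `∫₀^r e^{-cu} cos(du) w(u) du`,
`∫₀^r e^{-cu} sin(du) w(u) du` and `∫₀^r e^{-2cu} w(u) du`. The left-hand side is then the integral
of such a combination, for which an explicit primitive is checked by differentiation; the terms in
which `w` itself appears cancel by `sin² + cos² = 1`. The identity thus holds for every continuous
path with `w 0 = 0`.
-/

open Finset Set Topology

theorem sum_range_mul_sub_eq_sub_sum (u v : ℕ → ℝ) (n : ℕ) :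
    ∑ k ∈ range n, u k * (v (k + 1) - v k)
      = u n * v n - u 0 * v 0 - ∑ k ∈ range n, (u (k + 1) - u k) * v (k + 1) := by
  induction n with
  | zero => simp
  | succ n ih => rw [sum_range_succ, sum_range_succ, ih]; ring

section PathwiseIntegrationByParts

variable {f f' w : ℝ → ℝ} (hf : ∀ t, HasDerivAt f (f' t) t) (hf' : Continuous f')
  (hw : Continuous w)
include hf hf' hw

theorem abs_sub_mul_sub_integral_le {a b C ε : ℝ} (hab : a ≤ b)
    (hC : ∀ t ∈ Icc a b, |f' t| ≤ C) (hε : ∀ t ∈ Icc a b, |w b - w t| ≤ ε) :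
    |(f b - f a) * w b - ∫ t in a..b, f' t * w t| ≤ C * ε * (b - a) := by
  have hftc : f b - f a = ∫ t in a..b, f' t :=
    (integral_eq_sub_of_hasDerivAt (fun t _ => hf t) (hf'.intervalIntegrable a b)).symm
  have hdiff : (f b - f a) * w b - ∫ t in a..b, f' t * w t
      = ∫ t in a..b, f' t * (w b - w t) := by
    simp only [mul_sub]
    rw [integral_sub (Continuous.intervalIntegrable (by fun_prop) a b)
      (Continuous.intervalIntegrable (by fun_prop) a b), intervalIntegral.integral_mul_const,
      hftc]
  rw [hdiff, ← Real.norm_eq_abs, ← abs_of_nonneg (sub_nonneg.2 hab)]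
  refine intervalIntegral.norm_integral_le_of_norm_le_const fun t ht => ?_
  rw [uIoc_of_le hab] at ht
  have ht' : t ∈ Icc a b := Ioc_subset_Icc_self ht
  rw [Real.norm_eq_abs, abs_mul]
  exact mul_le_mul (hC t ht') (hε t ht') (abs_nonneg _) ((abs_nonneg _).trans (hC t ht'))

theorem tendsto_sum_sub_mul_integral {r : ℝ} (hr : 0 ≤ r) :
    Tendsto (fun n : ℕ => ∑ k ∈ range n,
        (f (((k : ℝ) + 1) * r / n) - f ((k : ℝ) * r / n)) * w (((k : ℝ) + 1) * r / n))
      atTop (𝓝 (∫ t in 0..r, f' t * w t)) := by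
  obtain ⟨C, hC⟩ := (isCompact_Icc (a := 0) (b := r)).exists_bound_of_continuousOn
    hf'.continuousOn
  simp only [Real.norm_eq_abs] at hC
  have hC0 : 0 ≤ C := (abs_nonneg _).trans (hC 0 ⟨le_rfl, hr⟩)
  have hbound : ∀ ε > 0, ∀ᶠ n : ℕ in atTop, |∑ k ∈ range n,
      (f (((k : ℝ) + 1) * r / n) - f ((k : ℝ) * r / n)) * w (((k : ℝ) + 1) * r / n)
        - ∫ t in 0..r, f' t * w t| ≤ C * ε * r := by
    intro ε hε
    obtain ⟨δ, hδ, hwδ⟩ := Metric.uniformContinuousOn_iff.1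
      ((isCompact_Icc (a := 0) (b := r)).uniformContinuousOn_of_continuous hw.continuousOn) ε hε
    filter_upwards [eventually_ne_atTop 0,
      (tendsto_const_div_atTop_nhds_zero_nat r).eventually (gt_mem_nhds hδ)] with n hn hrn
    set t : ℕ → ℝ := fun k => k * r / n with ht
    have hn' : (0 : ℝ) < n := by positivity
    have ht_mono : ∀ k, t k ≤ t (k + 1) := fun k => by simp only [ht]; gcongr; simp
    have ht_step : ∀ k, t (k + 1) - t k = r / n := fun k => by simp only [ht]; push_cast; ring
    have ht_mem : ∀ k ≤ n, t k ∈ Icc 0 r := fun k hk => ⟨by positivity, by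
      rw [ht, div_le_iff₀ hn']; nlinarith [show (k : ℝ) ≤ n by exact_mod_cast hk]⟩
    have hsplit :
        ∫ t in 0..r, f' t * w t = ∑ k ∈ range n, ∫ s in t k..t (k + 1), f' s * w s := by
      rw [sum_integral_adjacent_intervals fun k _ =>
        Continuous.intervalIntegrable (by fun_prop) _ _]
      simp [ht, hn'.ne']
    have hlocal : ∀ k ∈ range n, |(f (t (k + 1)) - f (t k)) * w (t (k + 1))
        - ∫ s in t k..t (k + 1), f' s * w s| ≤ C * ε * (r / n) := by
      intro k hk
      have hk : k + 1 ≤ n := mem_range.1 hk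
      have hsub : Icc (t k) (t (k + 1)) ⊆ Icc 0 r :=
        Icc_subset_Icc (ht_mem k (by omega)).1 (ht_mem (k + 1) hk).2
      rw [← ht_step k]
      refine abs_sub_mul_sub_integral_le hf hf' hw (ht_mono k) (fun s hs => hC s (hsub hs))
        fun s hs => ?_
      have hclose : dist (t (k + 1)) s < δ := by
        rw [Real.dist_eq, abs_of_nonneg (sub_nonneg.2 hs.2)]
        linarith [ht_step k, hs.1]
      exact (hwδ _ (ht_mem (k + 1) hk) s (hsub hs) hclose).le
    calc _ = |∑ k ∈ range n, ((f (t (k + 1)) - f (t k)) * w (t (k + 1))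
          - ∫ s in t k..t (k + 1), f' s * w s)| := by
          rw [hsplit, sum_sub_distrib]; simp [ht]
      _ ≤ ∑ k ∈ range n, C * ε * (r / n) :=
          (abs_sum_le_sum_abs _ _).trans (sum_le_sum hlocal)
      _ = C * ε * r := by rw [sum_const, card_range, nsmul_eq_mul]; field_simp
  refine Metric.tendsto_nhds.2 fun ε hε =>
    (hbound (ε / (C * r + 1)) (by positivity)).mono fun n hn => ?_
  have hlt : C * (ε / (C * r + 1)) * r < ε := by
    rw [show C * (ε / (C * r + 1)) * r = ε * (C * r) / (C * r + 1) by ring,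
      div_lt_iff₀ (by positivity)]
    nlinarith
  exact (Real.dist_eq _ _).trans_lt (hn.trans_lt hlt)

theorem itoInt_eq_sub_integral {r : ℝ} (hr : 0 ≤ r) :
    itoInt f w r = f r * w r - f 0 * w 0 - ∫ t in 0..r, f' t * w t := by
  refine Tendsto.limUnder_eq (((tendsto_const_nhds (x := f r * w r - f 0 * w 0)).sub
    (tendsto_sum_sub_mul_integral hf hf' hw hr)).congr' ?_)
  filter_upwards [eventually_ne_atTop 0] with n hn
  have hsum := sum_range_mul_sub_eq_sub_sum (fun k => f (k * r / n)) (fun k => w (k * r / n)) n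
  simp only [Nat.cast_add, Nat.cast_one, Nat.cast_zero, zero_mul, zero_div] at hsum
  rw [mul_div_cancel_left₀ r (Nat.cast_ne_zero.2 hn)] at hsum
  exact hsum.symm

end PathwiseIntegrationByParts

theorem itoInt_comp_sub {f f' w : ℝ → ℝ} (hf : ∀ t, HasDerivAt f (f' t) t)
    (hf' : Continuous f') (hw : Continuous w) {r : ℝ} (hr : 0 ≤ r) :
    itoInt (fun s => f (r - s)) w r
      = f 0 * w r - f r * w 0 + ∫ s in 0..r, f' (r - s) * w s := by
  rw [itoInt_eq_sub_integral (fun t => (hf (r - t)).comp_const_sub r t) (by fun_prop) hw hr]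
  simp only [sub_self, sub_zero, neg_mul, intervalIntegral.integral_neg]
  ring

open Real

noncomputable def expCosIntegral (c d : ℝ) (w : ℝ → ℝ) (r : ℝ) : ℝ :=
  ∫ u in 0..r, exp (-(c * u)) * cos (d * u) * w u

noncomputable def expSinIntegral (c d : ℝ) (w : ℝ → ℝ) (r : ℝ) : ℝ :=
  ∫ u in 0..r, exp (-(c * u)) * sin (d * u) * w u

noncomputable def expIntegral (c : ℝ) (w : ℝ → ℝ) (r : ℝ) : ℝ :=
  ∫ u in 0..r, exp (-(c * u)) * w u

section Kernels

variable (c d : ℝ) {w : ℝ → ℝ} (hw : Continuous w)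
include hw

theorem integral_exp_mul_sin_add_cos_mul (α β r : ℝ) :
    ∫ s in 0..r, exp (c * (r - s)) * (α * sin (d * (r - s)) + β * cos (d * (r - s))) * w s
      = exp (c * r) * ((α * sin (d * r) + β * cos (d * r)) * expCosIntegral c d w r
          + (β * sin (d * r) - α * cos (d * r)) * expSinIntegral c d w r) := by
  have hsep : ∀ s, exp (c * (r - s)) * (α * sin (d * (r - s)) + β * cos (d * (r - s))) * w s
      = exp (c * r) * ((α * sin (d * r) + β * cos (d * r)) * (exp (-(c * s)) * cos (d * s) * w s)
          + (β * sin (d * r) - α * cos (d * r)) * (exp (-(c * s)) * sin (d * s) * w s)) := by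
    intro s
    rw [mul_sub, mul_sub, sub_eq_add_neg (c * r), exp_add, sin_sub, cos_sub]
    ring
  simp only [hsep, intervalIntegral.integral_const_mul]
  rw [intervalIntegral.integral_add (Continuous.intervalIntegrable (by fun_prop) _ _)
    (Continuous.intervalIntegrable (by fun_prop) _ _), intervalIntegral.integral_const_mul,
    intervalIntegral.integral_const_mul, expCosIntegral, expSinIntegral]

theorem hasDerivAt_expCosIntegral (x : ℝ) :
    HasDerivAt (expCosIntegral c d w) (exp (-(c * x)) * cos (d * x) * w x) x :=
  ((by fun_prop : Continuous fun u => exp (-(c * u)) * cos (d * u) * w u).integral_hasStrictDerivAt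
    0 x).hasDerivAt

theorem hasDerivAt_expSinIntegral (x : ℝ) :
    HasDerivAt (expSinIntegral c d w) (exp (-(c * x)) * sin (d * x) * w x) x :=
  ((by fun_prop : Continuous fun u => exp (-(c * u)) * sin (d * u) * w u).integral_hasStrictDerivAt
    0 x).hasDerivAt

theorem hasDerivAt_expIntegral (x : ℝ) :
    HasDerivAt (expIntegral c w) (exp (-(c * x)) * w x) x :=
  ((by fun_prop : Continuous fun u => exp (-(c * u)) * w u).integral_hasStrictDerivAt
    0 x).hasDerivAt

theorem continuous_expCosIntegral : Continuous (expCosIntegral c d w) :=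
  continuous_iff_continuousAt.2 fun x => (hasDerivAt_expCosIntegral c d hw x).continuousAt

theorem continuous_expSinIntegral : Continuous (expSinIntegral c d w) :=
  continuous_iff_continuousAt.2 fun x => (hasDerivAt_expSinIntegral c d hw x).continuousAt

-- `c² - d²` and `2cd` are the real and imaginary parts of `(c + d i)²`.
theorem hasDerivAt_moment_primitive (hd : d ≠ 0) (x : ℝ) :
    HasDerivAt (fun r => 1 / (d * (c ^ 2 + d ^ 2)) * (2 * c * d * expIntegral (2 * c) w r
        - exp (-(c * r)) * (((c ^ 2 - d ^ 2) * sin (d * r) + 2 * c * d * cos (d * r))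
          * expCosIntegral c d w r + (2 * c * d * sin (d * r) - (c ^ 2 - d ^ 2) * cos (d * r))
            * expSinIntegral c d w r)))
      (1 / d * exp (-(c * x)) * ((c * sin (d * x) + d * cos (d * x)) * expCosIntegral c d w x
        + (d * sin (d * x) - c * cos (d * x)) * expSinIntegral c d w x)) x := by
  have hcd : c ^ 2 + d ^ 2 ≠ 0 := by positivity
  have hE := ((hasDerivAt_id' x).const_mul c).neg.exp
  have hsin := ((hasDerivAt_id' x).const_mul d).sin
  have hcos := ((hasDerivAt_id' x).const_mul d).cos
  refine ((((hasDerivAt_expIntegral (2 * c) hw x).const_mul (2 * c * d)).sub (hE.mul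
    ((((hsin.const_mul (c ^ 2 - d ^ 2)).add (hcos.const_mul (2 * c * d))).mul
      (hasDerivAt_expCosIntegral c d hw x)).add
      (((hsin.const_mul (2 * c * d)).sub (hcos.const_mul (c ^ 2 - d ^ 2))).mul
        (hasDerivAt_expSinIntegral c d hw x))))).const_mul
    (1 / (d * (c ^ 2 + d ^ 2)))).congr_deriv ?_
  have hE2 : exp (-(2 * c * x)) = exp (-(c * x)) ^ 2 := by rw [sq, ← exp_add]; ring_nf
  simp only [Pi.add_apply, Pi.sub_apply, Pi.mul_apply, Pi.neg_apply, hE2]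
  field_simp
  linear_combination (-(2 * c * d * exp (-(c * x)) * w x)) * sin_sq_add_cos_sq (d * x)

variable (hw0 : w 0 = 0)
include hw0

theorem Jp_eq {r : ℝ} (hr : 0 ≤ r) :
    Jp c d w r = 1 / d * exp (c * r)
      * ((c * sin (d * r) + d * cos (d * r)) * expCosIntegral c d w r
        + (d * sin (d * r) - c * cos (d * r)) * expSinIntegral c d w r) := by
  have hf : ∀ t, HasDerivAt (fun t => exp (c * t) * sin (d * t))
      (exp (c * t) * (c * sin (d * t) + d * cos (d * t))) t := fun t =>
    ((((hasDerivAt_id' t).const_mul c).exp).mul ((hasDerivAt_id' t).const_mul d).sin).congr_deriv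
      (by ring)
  rw [Jp, itoInt_comp_sub hf (by fun_prop) hw hr, integral_exp_mul_sin_add_cos_mul c d hw]
  simp only [mul_zero, exp_zero, sin_zero, zero_mul, hw0, sub_self, zero_add]
  ring

theorem Kp_eq {r : ℝ} (hr : 0 ≤ r) :
    Kp c d w r = 1 / d * (w r + exp (c * r)
      * ((-d * sin (d * r) + c * cos (d * r)) * expCosIntegral c d w r
        + (c * sin (d * r) + d * cos (d * r)) * expSinIntegral c d w r)) := by
  have hf : ∀ t, HasDerivAt (fun t => exp (c * t) * cos (d * t))
      (exp (c * t) * (-d * sin (d * t) + c * cos (d * t))) t := fun t =>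
    ((((hasDerivAt_id' t).const_mul c).exp).mul ((hasDerivAt_id' t).const_mul d).cos).congr_deriv
      (by ring)
  rw [Kp, itoInt_comp_sub hf (by fun_prop) hw hr, integral_exp_mul_sin_add_cos_mul c d hw]
  simp [hw0]

theorem itoInt_exp_mul_sub {r : ℝ} (hr : 0 ≤ r) :
    itoInt (fun s => exp (c * (r - s))) w r = w r + c * exp (c * r) * expIntegral c w r := by
  have hf : ∀ t, HasDerivAt (fun t => exp (c * t)) (exp (c * t) * c) t := fun t =>
    ((hasDerivAt_id' t).const_mul c).exp.congr_deriv (by ring)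
  have hsep : ∀ s, exp (c * (r - s)) * c * w s = c * exp (c * r) * (exp (-(c * s)) * w s) :=
    fun s => by rw [mul_sub, sub_eq_add_neg, exp_add]; ring
  simp only [itoInt_comp_sub hf (by fun_prop) hw hr, hsep, intervalIntegral.integral_const_mul,
    expIntegral, hw0, mul_zero, exp_zero, one_mul, sub_zero]

theorem integral_exp_mul_Jp (hd : d ≠ 0) {r : ℝ} (hr : 0 ≤ r) :
    (∫ s in 0..r, exp (2 * c * (r - s)) * Jp c d w s)
      = 1 / (c ^ 2 + d ^ 2) * (itoInt (fun s => exp (2 * c * (r - s))) w r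
          - (c * Jp c d w r + d * Kp c d w r)) := by
  have hcongr : EqOn (fun s => exp (2 * c * (r - s)) * Jp c d w s)
      (fun s => exp (2 * c * r) * (1 / d * exp (-(c * s)) * ((c * sin (d * s) + d * cos (d * s))
        * expCosIntegral c d w s + (d * sin (d * s) - c * cos (d * s)) * expSinIntegral c d w s)))
      (uIcc 0 r) := by
    intro s hs
    have hexp : exp (2 * c * (r - s)) * exp (c * s) = exp (2 * c * r) * exp (-(c * s)) := by
      rw [← exp_add, ← exp_add]; ring_nf
    simp only
    rw [Jp_eq c d hw hw0 (uIcc_of_le hr ▸ hs).1]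
    linear_combination (1 / d * ((c * sin (d * s) + d * cos (d * s)) * expCosIntegral c d w s
      + (d * sin (d * s) - c * cos (d * s)) * expSinIntegral c d w s)) * hexp
  have hCc := continuous_expCosIntegral c d hw
  have hSc := continuous_expSinIntegral c d hw
  rw [integral_congr hcongr, intervalIntegral.integral_const_mul,
    integral_eq_sub_of_hasDerivAt (fun x _ => hasDerivAt_moment_primitive c d hw hd x)
      (Continuous.intervalIntegrable (by fun_prop) _ _),
    itoInt_exp_mul_sub (2 * c) hw hw0 hr, Jp_eq c d hw hw0 hr, Kp_eq c d hw hw0 hr]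
  simp only [expCosIntegral, expSinIntegral, expIntegral, integral_same]
  have hcd : c ^ 2 + d ^ 2 ≠ 0 := by positivity
  rw [show 2 * c * r = c * r + c * r by ring, exp_add, exp_neg]
  field_simp
  ring

end Kernels

theorem stmt15_general {Ω : Type*} [MeasurableSpace Ω] (P : Measure Ω)
    (W : Ω → ℝ → ℝ) (c d : ℝ) (hd : d ≠ 0)
    (hWcont : ∀ ω, Continuous (W ω)) (hW0 : ∀ ω, W ω 0 = 0) :
    ∀ᵐ ω ∂P, ∀ r ∈ Set.Icc (0 : ℝ) 1,
      (∫ s in (0 : ℝ)..r, Real.exp (2 * c * (r - s)) * Jp c d (W ω) s)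
        = (1 / (c ^ 2 + d ^ 2)) *
            (itoInt (fun s => Real.exp (2 * c * (r - s))) (W ω) r
              - (c * Jp c d (W ω) r + d * Kp c d (W ω) r)) :=
  ae_of_all P fun ω _ hr => integral_exp_mul_Jp c d (hWcont ω) (hW0 ω) hd hr.1

/-- Lemma A.3(c):
`∫₀^r e^{2c(r−s)} J(s) ds = (1/(c²+d²))·(∫₀^r e^{2c(r−s)} dW(s) − (c·J(r) + d·K(r)))`
almost surely, for every `r ∈ [0,1]`. -/
theorem stmt15 {Ω : Type*} [MeasurableSpace Ω] (P : Measure Ω) [IsProbabilityMeasure P]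
    (W : Ω → ℝ → ℝ) (c d : ℝ) (hd : d ≠ 0) (hcd : c ^ 2 + d ^ 2 ≠ 0)
    (hWcont : ∀ ω, Continuous (W ω)) (hW0 : ∀ ω, W ω 0 = 0) :
    ∀ᵐ ω ∂P, ∀ r ∈ Set.Icc (0 : ℝ) 1,
      (∫ s in (0 : ℝ)..r, Real.exp (2 * c * (r - s)) * Jp c d (W ω) s)
        = (1 / (c ^ 2 + d ^ 2)) *
            (itoInt (fun s => Real.exp (2 * c * (r - s))) (W ω) r
              - (c * Jp c d (W ω) r + d * Kp c d (W ω) r)) :=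
  stmt15_general P W c d hd hWcont hW0
end

section
/- With W, J, K, G as above, almost surely ∫₀¹ G(r)² dr = (c² + d²)·∫₀¹ J(r)² dr + J(1)·G(1) − ∫₀¹ J(r) dW(r) − c·J(1)². -/
open Filter MeasureTheory intervalIntegral

/-!
For a continuous path `w`, the left-point Riemann–Stieltjes sums of a C¹ integrand `f` converge
to the integration-by-parts value `f r * w r - f 0 * w 0 - ∫₀^r f' w`. With `z = c + d i` the
kernels of `J` and `K` are the imaginary and real parts of `s ↦ exp (z (r - s))`, so, when
`w 0 = 0`, `d J = Im (z Z)` and `d K = w + Re (z Z)` for `Z r = ∫₀^r exp (z (r - s)) w s ds`, which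
solves `Z' = z Z + w`. Hence `J' = G` and `(G - w)' = 2 c G - (c² + d²) J`; the identity is the
fundamental theorem of calculus for `J (G - w) - c J²`, combined with `∫ J dw = J 1 * w 1 - ∫ G w`.
-/

open Set Topology Finset

section RiemannStieltjes

variable {f f' w : ℝ → ℝ}

theorem sum_mul_sub_eq_integral_add (hf : ∀ s, HasDerivAt f (f' s) s) (hf' : Continuous f')
    (hw : Continuous w) (a : ℕ → ℝ) (n : ℕ) :
    ∑ k ∈ range n, f (a k) * (w (a (k + 1)) - w (a k)) =
      f (a n) * w (a n) - f (a 0) * w (a 0) - (∫ s in a 0..a n, f' s * w s)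
        + ∑ k ∈ range n, ∫ s in a k..a (k + 1), f' s * (w s - w (a (k + 1))) := by
  have hint : ∀ x y, IntervalIntegrable (fun s => f' s * w s) volume x y :=
    fun x y => (hf'.mul hw).intervalIntegrable x y
  induction n with
  | zero => simp
  | succ n ih =>
    have hlast : ∫ s in a n..a (n + 1), f' s * (w s - w (a (n + 1))) =
        (∫ s in a n..a (n + 1), f' s * w s) - (f (a (n + 1)) - f (a n)) * w (a (n + 1)) := by
      simp only [mul_sub]
      rw [intervalIntegral.integral_sub (hint _ _) ((hf'.intervalIntegrable _ _).mul_const _),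
        intervalIntegral.integral_mul_const,
        intervalIntegral.integral_eq_sub_of_hasDerivAt (fun s _ => hf s)
          (hf'.intervalIntegrable _ _)]
    rw [sum_range_succ, sum_range_succ, ih, hlast,
      ← intervalIntegral.integral_add_adjacent_intervals (hint (a 0) (a n)) (hint _ (a (n + 1)))]
    ring

theorem abs_natCast_mul_div_le {k n : ℕ} (hk : k ≤ n) (r : ℝ) : |(k : ℝ) * r / n| ≤ |r| := by
  rcases n.eq_zero_or_pos with rfl | hn
  · simp
  rw [abs_div, abs_mul, Nat.abs_cast, Nat.abs_cast, div_le_iff₀ (by positivity), mul_comm]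
  exact mul_le_mul_of_nonneg_left (by exact_mod_cast hk) (abs_nonneg r)

theorem tendsto_sum_integral_mul_sub_zero (hf' : Continuous f') (hw : Continuous w) (r : ℝ) :
    Tendsto (fun n : ℕ => ∑ k ∈ range n,
      ∫ s in (k : ℝ) * r / n..((k : ℝ) + 1) * r / n, f' s * (w s - w (((k : ℝ) + 1) * r / n)))
      atTop (𝓝 0) := by
  set I := Icc (-|r|) |r|
  have hmem : ∀ {k n : ℕ}, k ≤ n → (k : ℝ) * r / n ∈ I :=
    fun hk => abs_le.1 (abs_natCast_mul_div_le hk r)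
  obtain ⟨C, hC⟩ := isCompact_Icc.exists_bound_of_continuousOn (s := I) hf'.continuousOn
  have hC0 : 0 ≤ C := (norm_nonneg _).trans (hC 0 ⟨by simp, abs_nonneg r⟩)
  rw [Metric.tendsto_atTop]
  intro ε hε
  set η := ε / (C * |r| + 1)
  have hη : 0 < η := by positivity
  obtain ⟨δ, hδ, hwδ⟩ := Metric.uniformContinuousOn_iff_le.1
    (isCompact_Icc.uniformContinuousOn_of_continuous hw.continuousOn) η hη
  obtain ⟨N, hN⟩ := exists_nat_gt (|r| / δ)
  refine ⟨N, fun n hn => ?_⟩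
  have hn0 : (0 : ℝ) < n :=
    (div_nonneg (abs_nonneg r) hδ.le).trans_lt (hN.trans_le (by exact_mod_cast hn))
  have hmesh : |r| / n ≤ δ := by
    rw [div_le_iff₀ hn0]
    rw [div_lt_iff₀ hδ] at hN
    nlinarith [(show (N : ℝ) ≤ n by exact_mod_cast hn)]
  have hstep : ∀ k ∈ range n, ‖∫ s in (k : ℝ) * r / n..((k : ℝ) + 1) * r / n,
      f' s * (w s - w (((k : ℝ) + 1) * r / n))‖ ≤ C * η * (|r| / n) := by
    intro k hk
    have hk' := mem_range.1 hk
    have hlo := hmem hk'.le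
    have hhi : ((k : ℝ) + 1) * r / n ∈ I := by exact_mod_cast hmem (Nat.succ_le_of_lt hk')
    have hlen : |((k : ℝ) + 1) * r / n - (k : ℝ) * r / n| = |r| / n := by
      rw [← sub_div, abs_div, abs_of_pos hn0]; ring_nf
    refine (intervalIntegral.norm_integral_le_of_norm_le_const fun s hs => ?_).trans_eq
      (by rw [hlen])
    have hs' := uIoc_subset_uIcc hs
    rw [norm_mul]
    refine mul_le_mul (hC s (uIcc_subset_Icc hlo hhi hs')) ?_ (norm_nonneg _) hC0
    refine hwδ s (uIcc_subset_Icc hlo hhi hs') _ hhi ?_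
    rw [Real.dist_eq, abs_sub_comm]
    exact (abs_sub_right_of_mem_uIcc hs').trans (hlen.trans_le hmesh)
  calc dist (∑ k ∈ range n, ∫ s in (k : ℝ) * r / n..((k : ℝ) + 1) * r / n,
        f' s * (w s - w (((k : ℝ) + 1) * r / n))) 0 ≤ ∑ k ∈ range n, C * η * (|r| / n) := by
        rw [dist_zero_right]; exact (norm_sum_le _ _).trans (sum_le_sum hstep)
    _ = C * |r| * η := by rw [sum_const, card_range, nsmul_eq_mul]; field_simp
    _ < ε := by
        rw [show C * |r| * η = ε * (C * |r| / (C * |r| + 1)) by simp only [η]; ring]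
        exact mul_lt_of_lt_one_right hε ((div_lt_one (by positivity)).2 (lt_add_one _))

theorem tendsto_riemannStieltjesSum (hf : ∀ s, HasDerivAt f (f' s) s)
    (hf' : Continuous f') (hw : Continuous w) (r : ℝ) :
    Tendsto (fun n : ℕ => ∑ k ∈ range n,
        f ((k : ℝ) * r / n) * (w (((k : ℝ) + 1) * r / n) - w ((k : ℝ) * r / n))) atTop
      (𝓝 (f r * w r - f 0 * w 0 - ∫ s in (0 : ℝ)..r, f' s * w s)) := by
  have h := (tendsto_sum_integral_mul_sub_zero hf' hw r).const_add
    (f r * w r - f 0 * w 0 - ∫ s in (0 : ℝ)..r, f' s * w s)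
  rw [add_zero] at h
  refine h.congr' ?_
  filter_upwards [eventually_ne_atTop 0] with n hn
  have hr : (n : ℝ) * r / n = r := by field_simp
  simpa [hr] using (sum_mul_sub_eq_integral_add hf hf' hw (fun k : ℕ => (k : ℝ) * r / n) n).symm

theorem itoInt_eq_of_hasDerivAt (hf : ∀ s, HasDerivAt f (f' s) s)
    (hf' : Continuous f') (hw : Continuous w) (r : ℝ) :
    itoInt f w r = f r * w r - f 0 * w 0 - ∫ s in (0 : ℝ)..r, f' s * w s :=
  (tendsto_riemannStieltjesSum hf hf' hw r).limUnder_eq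

end RiemannStieltjes

section CexpKernel

open Complex

noncomputable def cexpConv (z : ℂ) (w : ℝ → ℝ) (r : ℝ) : ℂ :=
  ∫ s in (0 : ℝ)..r, cexp (z * ↑(r - s)) * w s

theorem hasDerivAt_cexpConv (z : ℂ) {w : ℝ → ℝ} (hw : Continuous w) (r : ℝ) :
    HasDerivAt (cexpConv z w) (z * cexpConv z w r + w r) r := by
  have hfactor : cexpConv z w =
      fun x : ℝ => cexp (z * x) * ∫ s in (0 : ℝ)..x, cexp (-(z * s)) * w s := by
    funext x
    rw [← intervalIntegral.integral_const_mul]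
    refine intervalIntegral.integral_congr fun s _ => ?_
    simp only [← mul_assoc, ← Complex.exp_add, ofReal_sub]
    ring_nf
  have hexp : HasDerivAt (fun r : ℝ => cexp (z * r)) (cexp (z * r) * z) r := by
    simpa using (((hasDerivAt_id r).ofReal_comp).const_mul z).cexp
  have hint := (show Continuous fun s : ℝ => cexp (-(z * s)) * w s by
    fun_prop).integral_hasStrictDerivAt 0 r
  rw [hfactor]
  refine (hexp.mul hint.hasDerivAt).congr_deriv ?_
  rw [← mul_assoc, ← Complex.exp_add, add_neg_cancel, Complex.exp_zero, one_mul]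
  ring

theorem itoInt_clm_cexp (L : ℂ →L[ℝ] ℝ) (z : ℂ) {w : ℝ → ℝ} (hw : Continuous w) (r : ℝ) :
    itoInt (fun s => L (cexp (z * ↑(r - s)))) w r
      = L 1 * w r - L (cexp (z * r)) * w 0 + L (z * cexpConv z w r) := by
  have hderiv : ∀ s : ℝ, HasDerivAt (fun s : ℝ => L (cexp (z * ↑(r - s))))
      (L (-(z * cexp (z * ↑(r - s))))) s := by
    intro s
    have := ((((hasDerivAt_id s).const_sub r).ofReal_comp).const_mul z).cexp
    exact L.hasFDerivAt.comp_hasDerivAt s (by simpa [mul_comm] using this)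
  rw [itoInt_eq_of_hasDerivAt hderiv (by fun_prop) hw r]
  have hint : ∫ s in (0 : ℝ)..r, L (-(z * cexp (z * ↑(r - s)))) * w s
      = L (∫ s in (0 : ℝ)..r, -(z * (cexp (z * ↑(r - s)) * w s))) := by
    rw [← L.intervalIntegral_comp_comm ((by fun_prop : Continuous fun s : ℝ =>
      -(z * (cexp (z * ↑(r - s)) * w s))).intervalIntegrable 0 r)]
    refine intervalIntegral.integral_congr fun s _ => ?_
    rw [mul_comm, ← smul_eq_mul, ← L.map_smul, Complex.real_smul]
    ring_nf
  rw [hint, intervalIntegral.integral_neg, intervalIntegral.integral_const_mul]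
  simp [cexpConv]

variable {c d : ℝ} {w : ℝ → ℝ}

theorem cexp_mk_mul_ofReal (c d t : ℝ) :
    cexp (⟨c, d⟩ * t) =
      ⟨Real.exp (c * t) * Real.cos (d * t), Real.exp (c * t) * Real.sin (d * t)⟩ := by
  apply Complex.ext <;> simp [Complex.exp_re, Complex.exp_im]

theorem Jp_eq_s17 (hw : Continuous w) (hw0 : w 0 = 0) (r : ℝ) :
    Jp c d w r = (⟨c, d⟩ * cexpConv ⟨c, d⟩ w r).im / d := by
  have h := itoInt_clm_cexp imCLM ⟨c, d⟩ hw r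
  simp only [imCLM_apply, cexp_mk_mul_ofReal, one_im, hw0] at h
  rw [Jp, h]
  ring

theorem Kp_eq_s17 (hw : Continuous w) (hw0 : w 0 = 0) (r : ℝ) :
    Kp c d w r = (w r + (⟨c, d⟩ * cexpConv ⟨c, d⟩ w r).re) / d := by
  have h := itoInt_clm_cexp reCLM ⟨c, d⟩ hw r
  simp only [reCLM_apply, cexp_mk_mul_ofReal, one_re, hw0] at h
  rw [Kp, h]
  ring

theorem hasDerivAt_clm_mul_cexpConv (L : ℂ →L[ℝ] ℝ) (z : ℂ) (hw : Continuous w) (r : ℝ) :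
    HasDerivAt (fun r => L (z * cexpConv z w r)) (L (z * (z * cexpConv z w r + w r))) r :=
  L.hasFDerivAt.comp_hasDerivAt r ((hasDerivAt_cexpConv z hw r).const_mul z)

theorem hasDerivAt_Jp (hd : d ≠ 0) (hw : Continuous w) (hw0 : w 0 = 0) (r : ℝ) :
    HasDerivAt (Jp c d w) (Gp c d w r) r := by
  rw [show Jp c d w = fun r => imCLM (⟨c, d⟩ * cexpConv ⟨c, d⟩ w r) / d from
    funext (Jp_eq_s17 hw hw0)]
  refine ((hasDerivAt_clm_mul_cexpConv imCLM ⟨c, d⟩ hw r).div_const d).congr_deriv ?_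
  simp only [Gp, Jp_eq_s17 hw hw0, Kp_eq_s17 hw hw0, imCLM_apply, mul_im, mul_re, add_re, add_im,
    ofReal_re, ofReal_im]
  field_simp
  ring

theorem hasDerivAt_Gp_sub (hd : d ≠ 0) (hw : Continuous w) (hw0 : w 0 = 0) (r : ℝ) :
    HasDerivAt (fun r => Gp c d w r - w r)
      (2 * c * Gp c d w r - (c ^ 2 + d ^ 2) * Jp c d w r) r := by
  have hG : (fun r => Gp c d w r - w r) = fun r =>
      reCLM (⟨c, d⟩ * cexpConv ⟨c, d⟩ w r) + c / d * imCLM (⟨c, d⟩ * cexpConv ⟨c, d⟩ w r) := by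
    funext r
    simp only [Gp, Jp_eq_s17 hw hw0, Kp_eq_s17 hw hw0, reCLM_apply, imCLM_apply]
    field_simp
    ring
  rw [hG]
  refine ((hasDerivAt_clm_mul_cexpConv reCLM ⟨c, d⟩ hw r).add
    ((hasDerivAt_clm_mul_cexpConv imCLM ⟨c, d⟩ hw r).const_mul (c / d))).congr_deriv ?_
  simp only [Gp, Jp_eq_s17 hw hw0, Kp_eq_s17 hw hw0, reCLM_apply, imCLM_apply, mul_im, mul_re, add_re,
    add_im, ofReal_re, ofReal_im]
  field_simp
  ring

end CexpKernel

theorem integral_sq_eq_of_hasDerivAt {J G w : ℝ → ℝ} {c q : ℝ} (hw : Continuous w)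
    (hJ : ∀ r, HasDerivAt J (G r) r)
    (hH : ∀ r, HasDerivAt (fun r => G r - w r) (2 * c * G r - q * J r) r)
    (hJ0 : J 0 = 0) (t : ℝ) :
    ∫ r in (0 : ℝ)..t, G r ^ 2
      = q * (∫ r in (0 : ℝ)..t, J r ^ 2) + J t * G t - itoInt J w t - c * J t ^ 2 := by
  have hJc : Continuous J := continuous_iff_continuousAt.2 fun r => (hJ r).continuousAt
  have hG : Continuous G :=
    ((continuous_iff_continuousAt.2 fun r => (hH r).continuousAt).add hw).congr
      fun r => sub_add_cancel (G r) (w r)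
  have hF : ∀ r, HasDerivAt (fun r => J r * (G r - w r) - c * J r ^ 2)
      (G r ^ 2 - G r * w r - q * J r ^ 2) r := fun r =>
    (((hJ r).mul (hH r)).sub (((hJ r).pow 2).const_mul c)).congr_deriv (by ring)
  have hFTC := intervalIntegral.integral_eq_sub_of_hasDerivAt (fun r _ => hF r)
    ((by fun_prop : Continuous fun r => G r ^ 2 - G r * w r - q * J r ^ 2).intervalIntegrable 0 t)
  have hint : ∀ {F : ℝ → ℝ}, Continuous F → IntervalIntegrable F volume 0 t :=
    fun h => h.intervalIntegrable 0 t
  rw [intervalIntegral.integral_sub (hint (by fun_prop)) (hint (by fun_prop)),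
    intervalIntegral.integral_sub (hint (by fun_prop)) (hint (by fun_prop)),
    intervalIntegral.integral_const_mul, hJ0] at hFTC
  rw [itoInt_eq_of_hasDerivAt hJ hG hw, hJ0]
  linear_combination hFTC

theorem stmt17_general {Ω : Type*} [MeasurableSpace Ω] (P : Measure Ω)
    (W : Ω → ℝ → ℝ) (c d : ℝ) (hd : d ≠ 0)
    (hWcont : ∀ ω, Continuous (W ω)) (hW0 : ∀ ω, W ω 0 = 0) :
    ∀ᵐ ω ∂P,
      (∫ r in (0 : ℝ)..1, (Gp c d (W ω) r) ^ 2)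
        = (c ^ 2 + d ^ 2) * (∫ r in (0 : ℝ)..1, (Jp c d (W ω) r) ^ 2)
          + Jp c d (W ω) 1 * Gp c d (W ω) 1
          - itoInt (Jp c d (W ω)) (W ω) 1
          - c * (Jp c d (W ω) 1) ^ 2 := by
  refine Eventually.of_forall fun ω => ?_
  have hJ0 : Jp c d (W ω) 0 = 0 := by simp [Jp_eq_s17 (hWcont ω) (hW0 ω), cexpConv]
  exact integral_sq_eq_of_hasDerivAt (hWcont ω) (hasDerivAt_Jp hd (hWcont ω) (hW0 ω))
    (hasDerivAt_Gp_sub hd (hWcont ω) (hW0 ω)) hJ0 1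

/-- Lemma A.3(e): almost surely
`∫₀¹ G² = (c² + d²)·∫₀¹ J² + J(1)·G(1) − ∫₀¹ J dW − c·J(1)²`. -/
theorem stmt17 {Ω : Type*} [MeasurableSpace Ω] (P : Measure Ω) [IsProbabilityMeasure P]
    (W : Ω → ℝ → ℝ) (c d : ℝ) (hd : d ≠ 0)
    (hWcont : ∀ ω, Continuous (W ω)) (hW0 : ∀ ω, W ω 0 = 0) :
    ∀ᵐ ω ∂P,
      (∫ r in (0 : ℝ)..1, (Gp c d (W ω) r) ^ 2)
        = (c ^ 2 + d ^ 2) * (∫ r in (0 : ℝ)..1, (Jp c d (W ω) r) ^ 2)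
          + Jp c d (W ω) 1 * Gp c d (W ω) 1
          - itoInt (Jp c d (W ω)) (W ω) 1
          - c * (Jp c d (W ω) 1) ^ 2 :=
  stmt17_general P W c d hd hWcont hW0
end
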